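/- Let xs < xt be integers, C ≥ 0 a real number, and f : ℤ → ℝ a function satisfying the Ameso(C) condition on [xs,xt]. Suppose there exist x0 ∈ [xs,xt] and a positive integer b with x0 + b ≤ xt such that (a) f(x0) = min over y ∈ [x0, x0+b] of f(y), and (b) f(x0) + C ≤ max over y ∈ [x0, x0+b] of f(y). Let z be the largest element of [x0, x0+b] at which f attains its maximum over [x0, x0+b]. Then 2·z > 2·x0 + b (i.e., z lies in the right half-open interval (x0 + b/2, x0 + b]). -/

import Mathlib

/-- Ceiling of `(x+y)/2` as a rational. -/
def mceil (x y : ℤ) : ℤ := ⌈((x : ℚ) + (y : ℚ)) / 2⌉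

/-- Floor of `(x+y)/2` as a rational. -/
def mfloor (x y : ℤ) : ℤ := ⌊((x : ℚ) + (y : ℚ)) / 2⌋

/-! If the largest maximizer `z` sat in the left half, its mirror image `y = 2z - x0` would lie
in `[x0, x0 + b]`, and the Ameso inequality at the pair `x0, y`, whose midpoint is `z`, gives
`f y ≥ 2 f z - f x0 - C ≥ f z`; so `y` is a maximizer to the right of `z` unless `z = x0`.
In that last case the minimum and the maximum coincide, and `x0 + b` is a larger maximizer. -/

theorem cast_add_div_two_of_add_eq_two_mul {x y z : ℤ} (h : x + y = 2 * z) :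
    ((x : ℚ) + y) / 2 = z := by
  rw [← Int.cast_add, h]; push_cast; ring

theorem mceil_eq_of_add_eq_two_mul {x y z : ℤ} (h : x + y = 2 * z) : mceil x y = z := by
  rw [mceil, cast_add_div_two_of_add_eq_two_mul h, Int.ceil_intCast]

theorem mfloor_eq_of_add_eq_two_mul {x y z : ℤ} (h : x + y = 2 * z) : mfloor x y = z := by
  rw [mfloor, cast_add_div_two_of_add_eq_two_mul h, Int.floor_intCast]

theorem eq_of_ameso_at_mirror {C : ℝ} {f : ℤ → ℝ} {x y z : ℤ}
    (hAmeso : f x + f y + C ≥ f (mceil x y) + f (mfloor x y)) (hmid : x + y = 2 * z)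
    (hgap : f x + C ≤ f z) (hyz : f y ≤ f z) : f y = f z := by
  rw [mceil_eq_of_add_eq_two_mul hmid, mfloor_eq_of_add_eq_two_mul hmid] at hAmeso
  linarith

/-- Lemma 2: if `f(x0)` is the minimum of `f` on `[x0, x0+b]` and
`f(x0) + C ≤ max_{[x0, x0+b]} f`, then the largest maximizer `z` of `f` on `[x0, x0+b]`
lies in the right half `(x0 + b/2, x0 + b]`, i.e. `2z > 2x0 + b`. -/
theorem ameso_rightnarrow_local
    (xs xt : ℤ) (C : ℝ) (f : ℤ → ℝ)
    (hAmeso : ∀ x ∈ Finset.Icc xs xt, ∀ y ∈ Finset.Icc xs xt,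
      f x + f y + C ≥ f (mceil x y) + f (mfloor x y))
    (x0 : ℤ) (hx0l : xs ≤ x0)
    (b : ℤ) (hb : 0 < b) (hbt : x0 + b ≤ xt)
    (hmin : f x0 = (Finset.Icc x0 (x0 + b)).inf' (Finset.nonempty_Icc.2 (by omega)) f)
    (hmax : f x0 + C ≤ (Finset.Icc x0 (x0 + b)).sup' (Finset.nonempty_Icc.2 (by omega)) f)
    (z : ℤ) (hz : z ∈ Finset.Icc x0 (x0 + b))
    (hzmax : f z = (Finset.Icc x0 (x0 + b)).sup' (Finset.nonempty_Icc.2 (by omega)) f)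
    (hzlargest : ∀ w ∈ Finset.Icc x0 (x0 + b), f w = f z → w ≤ z) :
    2 * z > 2 * x0 + b := by
  by_contra! hleft
  obtain ⟨hx0z, hzb⟩ := Finset.mem_Icc.1 hz
  have hle_max : ∀ w ∈ Finset.Icc x0 (x0 + b), f w ≤ f z :=
    fun w hw => hzmax ▸ Finset.le_sup' f hw
  have hend : x0 + b ∈ Finset.Icc x0 (x0 + b) := Finset.mem_Icc.2 ⟨by omega, le_rfl⟩
  rcases hx0z.eq_or_lt with rfl | hx0z
  · have hconst : f (x0 + b) = f x0 :=
      le_antisymm (hle_max _ hend) (hmin ▸ Finset.inf'_le f hend)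
    have := hzlargest _ hend hconst
    omega
  · have hmirror : 2 * z - x0 ∈ Finset.Icc x0 (x0 + b) := Finset.mem_Icc.2 ⟨by omega, by omega⟩
    have hpair := hAmeso x0 (Finset.mem_Icc.2 ⟨hx0l, by omega⟩) (2 * z - x0)
      (Finset.mem_Icc.2 ⟨by omega, by omega⟩)
    have := hzlargest _ hmirror
      (eq_of_ameso_at_mirror hpair (by ring) (hzmax ▸ hmax) (hle_max _ hmirror))
    omega
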